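/- arXiv:1708.03684 — 3 statements merged into one kernel-verified Lean document; each statement's English description precedes it below -/
import Mathlib

section
/- No-cloning theorem: for n ≥ 1, there is no unitary matrix U on ℂ^(2^n) ⊗ ℂ^(2^n) such that U(ψ ⊗ e₀) = ψ ⊗ ψ for every unit vector ψ ∈ ℂ^(2^n), where e₀ is the first standard basis vector of ℂ^(2^n). -/
/-!
Cloning is incompatible with linearity. If `U` clones the basis vectors `eᵢ` and `eⱼ` (`i ≠ j`),
then by linearity it sends `(a eᵢ + b eⱼ) ⊗ e` to `a eᵢ ⊗ eᵢ + b eⱼ ⊗ eⱼ`, whose `(i, j)` entry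
is `0`, whereas the clone `(a eᵢ + b eⱼ) ⊗ (a eᵢ + b eⱼ)` has `(i, j)` entry `a b ≠ 0`.
Taking `(a, b) = (3/5, 4/5)` makes `a eᵢ + b eⱼ` a unit vector without square roots.
-/

open Matrix

section Cloning

variable {ι κ R : Type*} [CommRing R]

def tensorVec (x : ι → R) (y : κ → R) : ι × κ → R := fun p => x p.1 * y p.2

lemma tensorVec_add_left (x y : ι → R) (z : κ → R) :
    tensorVec (x + y) z = tensorVec x z + tensorVec y z := by
  ext p; simp [tensorVec, add_mul]

lemma tensorVec_single_left [DecidableEq ι] (i : ι) (a : R) (z : κ → R) :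
    tensorVec (Pi.single i a) z = a • tensorVec (Pi.single i 1) z := by
  ext p; by_cases h : p.1 = i <;> simp [tensorVec, h]

variable [Fintype ι]

def Clones (U : Matrix (ι × ι) (ι × ι) R) (e x : ι → R) : Prop :=
  U *ᵥ tensorVec x e = tensorVec x x

lemma not_clones_single_add_single [DecidableEq ι] [NoZeroDivisors R]
    {U : Matrix (ι × ι) (ι × ι) R} {e : ι → R} {i j : ι} (hij : i ≠ j) {a b : R}
    (ha : a ≠ 0) (hb : b ≠ 0) (hi : Clones U e (Pi.single i 1))
    (hj : Clones U e (Pi.single j 1)) :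
    ¬ Clones U e (Pi.single i a + Pi.single j b) := by
  intro h
  have hlin : U *ᵥ tensorVec (Pi.single i a + Pi.single j b) e =
      a • tensorVec (Pi.single i 1) (Pi.single i 1) +
        b • tensorVec (Pi.single j 1) (Pi.single j 1) := by
    rw [tensorVec_add_left, tensorVec_single_left i, tensorVec_single_left j, mulVec_add,
      mulVec_smul, mulVec_smul, hi, hj]
  simpa [tensorVec, hij, hij.symm, ha, hb] using congrFun (h.symm.trans hlin) (i, j)

end Cloning

lemma EuclideanSpace.norm_single_add_single {ι 𝕜 : Type*} [Fintype ι] [DecidableEq ι] [RCLike 𝕜]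
    {i j : ι} (hij : i ≠ j) (a b : 𝕜) :
    ‖EuclideanSpace.single i a + EuclideanSpace.single j b‖ = √(‖a‖ ^ 2 + ‖b‖ ^ 2) := by
  have hpyth := norm_add_sq_eq_norm_sq_add_norm_sq_of_inner_eq_zero (𝕜 := 𝕜)
    (EuclideanSpace.single i a) (EuclideanSpace.single j b) (by
      rw [EuclideanSpace.inner_single_left]; simp [hij.symm])
  rw [PiLp.norm_single, PiLp.norm_single] at hpyth
  rw [sq, sq, ← hpyth, Real.sqrt_mul_self (norm_nonneg _)]

theorem no_cloning (n : ℕ) (hn : 1 ≤ n) :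
    ¬ ∃ U : Matrix (Fin (2 ^ n) × Fin (2 ^ n)) (Fin (2 ^ n) × Fin (2 ^ n)) ℂ,
        U ∈ Matrix.unitaryGroup (Fin (2 ^ n) × Fin (2 ^ n)) ℂ ∧
        ∀ ψ : EuclideanSpace ℂ (Fin (2 ^ n)), ‖ψ‖ = 1 →
          U.mulVec (fun p => ψ p.1 * (Pi.single (0 : Fin (2 ^ n)) 1 : Fin (2 ^ n) → ℂ) p.2) =
            fun p => ψ p.1 * ψ p.2 := by
  rintro ⟨U, -, hclone⟩
  have : Nontrivial (Fin (2 ^ n)) :=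
    Fin.nontrivial_iff_two_le.mpr (le_self_pow₀ one_le_two (by omega))
  obtain ⟨i, j, hij⟩ := exists_pair_ne (Fin (2 ^ n))
  have hbasis (k : Fin (2 ^ n)) : Clones U (Pi.single 0 1) (Pi.single k 1) :=
    hclone (EuclideanSpace.single k 1) (by simp)
  refine not_clones_single_add_single hij (a := 3 / 5) (b := 4 / 5) (by norm_num) (by norm_num)
    (hbasis i) (hbasis j) ?_
  have hunit : ‖EuclideanSpace.single i (3 / 5 : ℂ) + EuclideanSpace.single j (4 / 5)‖ = 1 := by
    rw [EuclideanSpace.norm_single_add_single hij]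
    norm_num
  exact hclone _ hunit
end

section
/- If U is unitary and maps ψ ⊗ e₀ to ψ ⊗ ψ and φ ⊗ e₀ to φ ⊗ φ for unit vectors ψ, φ, then the inner product ⟨φ, ψ⟩ equals 0 or 1. -/
/-!
A unitary preserves inner products, and the inner product of product vectors factors, so
`⟨φ, ψ⟩ ⟨e₀, e₀⟩ = ⟨φ, ψ⟩ ^ 2`. With `⟨e₀, e₀⟩ = 1` this says `⟨φ, ψ⟩` is idempotent in `ℂ`.
-/

open Matrix

namespace Matrix

variable {ι κ α : Type*} [Fintype ι] [Fintype κ]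

lemma mulVec_dotProduct_star_mulVec_of_mem_unitaryGroup [DecidableEq ι] [CommRing α] [StarRing α]
    {U : Matrix ι ι α} (hU : U ∈ unitaryGroup ι α) (v w : ι → α) :
    U *ᵥ w ⬝ᵥ star (U *ᵥ v) = w ⬝ᵥ star v := by
  rw [dotProduct_comm, star_mulVec, ← dotProduct_mulVec, mulVec_mulVec,
    ← star_eq_conjTranspose, mem_unitaryGroup_iff'.mp hU, one_mulVec, dotProduct_comm]

lemma dotProduct_star_prod_mul [CommSemiring α] [StarRing α] (a c : ι → α) (b d : κ → α) :
    (fun p : ι × κ => c p.1 * d p.2) ⬝ᵥ star (fun p => a p.1 * b p.2) =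
      (c ⬝ᵥ star a) * (d ⬝ᵥ star b) := by
  simp only [dotProduct, Pi.star_apply, star_mul', Fintype.sum_prod_type, Finset.sum_mul_sum]
  exact Finset.sum_congr rfl fun _ _ => Finset.sum_congr rfl fun _ _ => by ring

end Matrix

theorem cloning_inner_product_general (N : ℕ)
    (U : Matrix (Fin N × Fin N) (Fin N × Fin N) ℂ)
    (hU : U ∈ Matrix.unitaryGroup (Fin N × Fin N) ℂ)
    (ψ φ e₀ : EuclideanSpace ℂ (Fin N))
    (he : ‖e₀‖ = 1)
    (h1 : U.mulVec (fun p => ψ p.1 * e₀ p.2) = fun p => ψ p.1 * ψ p.2)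
    (h2 : U.mulVec (fun p => φ p.1 * e₀ p.2) = fun p => φ p.1 * φ p.2) :
    (inner ℂ φ ψ : ℂ) = 0 ∨ (inner ℂ φ ψ : ℂ) = 1 := by
  have he₀ : (e₀ : Fin N → ℂ) ⬝ᵥ star e₀ = 1 := by
    rw [← EuclideanSpace.inner_eq_star_dotProduct, inner_self_eq_norm_sq_to_K, he]
    norm_num
  have hinner := mulVec_dotProduct_star_mulVec_of_mem_unitaryGroup hU
    (fun p => φ p.1 * e₀ p.2) (fun p => ψ p.1 * e₀ p.2)
  rw [h1, h2, dotProduct_star_prod_mul, dotProduct_star_prod_mul, he₀, mul_one,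
    ← EuclideanSpace.inner_eq_star_dotProduct] at hinner
  exact IsIdempotentElem.iff_eq_zero_or_one.mp hinner

theorem cloning_inner_product (N : ℕ)
    (U : Matrix (Fin N × Fin N) (Fin N × Fin N) ℂ)
    (hU : U ∈ Matrix.unitaryGroup (Fin N × Fin N) ℂ)
    (ψ φ e₀ : EuclideanSpace ℂ (Fin N))
    (hψ : ‖ψ‖ = 1) (hφ : ‖φ‖ = 1) (he : ‖e₀‖ = 1)
    (h1 : U.mulVec (fun p => ψ p.1 * e₀ p.2) = fun p => ψ p.1 * ψ p.2)
    (h2 : U.mulVec (fun p => φ p.1 * e₀ p.2) = fun p => φ p.1 * φ p.2) :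
    (inner ℂ φ ψ : ℂ) = 0 ∨ (inner ℂ φ ψ : ℂ) = 1 :=
  cloning_inner_product_general N U hU ψ φ e₀ he h1 h2
end

section
/- One Grover iteration acts as a rotation: the map (d, u) ↦ ((1 − 1/2^{n−1})d + (2√(2^n−1)/2^n)u, −(2√(2^n−1)/2^n)d + (1 − 1/2^{n−1})u) is given by the rotation matrix [[cos θ, sin θ], [−sin θ, cos θ]] with sin θ = 2√(2^n − 1)/2^n; in particular (1 − 1/2^{n−1})² + (2√(2^n−1)/2^n)² = 1. -/
/-! With `N = 2 ^ n`, the two coefficients are `1 - 2 / N` and `2 √(N - 1) / N`, whose squares sum to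
`((N - 2) ^ 2 + 4 (N - 1)) / N ^ 2 = 1`. A point `(c, s)` of the unit circle is `(cos θ, sin θ)` for
`θ = arg (c + s i)`, and the iteration matrix is then the rotation matrix by `θ`. -/

open Real Matrix

theorem exists_sin_cos_eq_of_sq_add_sq_eq_one {c s : ℝ} (h : c ^ 2 + s ^ 2 = 1) :
    ∃ θ : ℝ, sin θ = s ∧ cos θ = c := by
  set z : ℂ := ⟨c, s⟩
  have hz : ‖z‖ = 1 := by
    rw [Complex.norm_def, Complex.normSq_mk, ← sq, ← sq, h, sqrt_one]
  have hz0 : z ≠ 0 := norm_ne_zero_iff.mp (hz ▸ one_ne_zero)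
  exact ⟨z.arg, by rw [Complex.sin_arg, hz, div_one], by rw [Complex.cos_arg hz0, hz, div_one]⟩

theorem one_sub_two_div_sq_add_two_mul_sqrt_sub_one_div_sq_eq_one {N : ℝ} (hN : 1 ≤ N) :
    (1 - 2 / N) ^ 2 + (2 * √(N - 1) / N) ^ 2 = 1 := by
  have hN0 : N ≠ 0 := (zero_lt_one.trans_le hN).ne'
  rw [div_pow, mul_pow, sq_sqrt (by linarith)]
  field_simp
  ring

theorem one_div_two_pow_pred {n : ℕ} (hn : 1 ≤ n) : (1 : ℝ) / 2 ^ (n - 1) = 2 / 2 ^ n := by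
  obtain ⟨m, rfl⟩ := Nat.exists_eq_add_of_le' hn
  rw [Nat.add_sub_cancel, pow_succ]
  field_simp

theorem Matrix.mulVec_rotation {R : Type*} [CommRing R] (a b d u : R) :
    !![a, b; -b, a] *ᵥ ![d, u] = ![a * d + b * u, -b * d + a * u] := by
  rw [mulVec_fin_two]
  simp

theorem grover_iteration_rotation (n : ℕ) (hn : 1 ≤ n) :
    (∃ θ : ℝ,
        Real.sin θ = 2 * Real.sqrt (2 ^ n - 1) / 2 ^ n ∧
        Real.cos θ = 1 - 1 / 2 ^ (n - 1) ∧
        ∀ d u : ℝ,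
          Matrix.mulVec !![Real.cos θ, Real.sin θ; -Real.sin θ, Real.cos θ] ![d, u] =
            ![(1 - 1 / 2 ^ (n - 1)) * d + 2 * Real.sqrt (2 ^ n - 1) / 2 ^ n * u,
              -(2 * Real.sqrt (2 ^ n - 1) / 2 ^ n) * d + (1 - 1 / 2 ^ (n - 1)) * u]) ∧
    (1 - 1 / 2 ^ (n - 1)) ^ 2 + (2 * Real.sqrt (2 ^ n - 1) / 2 ^ n) ^ 2 = 1 := by
  rw [one_div_two_pow_pred hn]
  have hunit : (1 - 2 / 2 ^ n : ℝ) ^ 2 + (2 * √(2 ^ n - 1) / 2 ^ n) ^ 2 = 1 :=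
    one_sub_two_div_sq_add_two_mul_sqrt_sub_one_div_sq_eq_one (one_le_pow₀ one_le_two)
  obtain ⟨θ, hsin, hcos⟩ := exists_sin_cos_eq_of_sq_add_sq_eq_one hunit
  refine ⟨⟨θ, hsin, hcos, fun d u => ?_⟩, hunit⟩
  rw [mulVec_rotation, hsin, hcos]
end
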